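/- arXiv:0803.4044 — 6 statements merged into one kernel-verified Lean document; each statement's English description precedes it below -/
import Mathlib

section
/- Let G be a countable abelian group and H a subgroup of ℤ × G × ℤ. Suppose (h_M)_{M∈S} is a sequence of integers taking infinitely many distinct values, indexed over an infinite set S, and for each M ∈ S define φ_M : ℤ × G × ℤ → ℤ × G by φ_M(a, b, c) = (a + h_M · c, b). If (1, 0) ∈ φ_M(H) for all M ∈ S, then H ∩ (ℤ × {0} × {0}) contains a nonzero element, i.e., there exists D ≠ 0 with (D, 0, 0) ∈ H. -/
/-!
Take `(a₀, 0, c₀) ∈ H` lying over `(1, 0)` for one parameter `h₀`. If `c₀ = 0` this is `(1, 0, 0)`.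
Otherwise choose a second parameter `h₁` with `|h₁ - h₀| ≥ 3` and `(a₁, 0, c₁) ∈ H` over `(1, 0)`;
eliminating the last coordinate gives `(c₁ a₀ - c₀ a₁, 0, 0) ∈ H`. Substituting `aᵢ = 1 - hᵢ cᵢ`,
this coordinate is `c₁ - c₀ + c₀ c₁ (h₁ - h₀)`; if it vanished, then `c₁ ≠ 0` and
`3 |c₀ c₁| ≤ |c₀ - c₁| ≤ |c₀| + |c₁|`, impossible for nonzero integers.
-/

theorem Set.Infinite.exists_le_abs_sub {s : Set ℤ} (hs : s.Infinite) (a r : ℤ) :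
    ∃ b ∈ s, r ≤ |b - a| := by
  obtain ⟨b, hb, hb_far⟩ := hs.exists_notMem_finset (Finset.Ioo (a - r) (a + r))
  refine ⟨b, hb, ?_⟩
  rw [Finset.mem_Ioo, not_and_or, not_lt, not_lt] at hb_far
  rcases hb_far with hb_far | hb_far <;> rw [le_abs] <;> omega

theorem Int.eq_zero_of_cross_eq_zero {a₀ c₀ a₁ c₁ h₀ h₁ : ℤ}
    (hx : a₀ + h₀ * c₀ = 1) (hy : a₁ + h₁ * c₁ = 1) (hfar : 3 ≤ |h₁ - h₀|)
    (hcross : c₁ * a₀ - c₀ * a₁ = 0) : c₀ = 0 := by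
  have key : c₀ * c₁ * (h₁ - h₀) = c₀ - c₁ := by
    linear_combination c₀ * hy - c₁ * hx + hcross
  by_contra hc₀
  have hc₁ : c₁ ≠ 0 := by
    rintro rfl
    exact hc₀ (by simpa using key.symm)
  have habs : |c₀| * |c₁| * |h₁ - h₀| = |c₀ - c₁| := by
    rw [← abs_mul, ← abs_mul, key]
  have h0 : 1 ≤ |c₀| := Int.one_le_abs hc₀
  have h1 : 1 ≤ |c₁| := Int.one_le_abs hc₁
  nlinarith [abs_sub c₀ c₁, mul_le_mul_of_nonneg_left hfar (by positivity : 0 ≤ |c₀| * |c₁|)]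

theorem AddSubgroup.cross_mem_of_mem {G : Type*} [AddCommGroup G] {H : AddSubgroup (ℤ × G × ℤ)}
    {a₀ c₀ a₁ c₁ : ℤ} (hx : (a₀, (0 : G), c₀) ∈ H) (hy : (a₁, (0 : G), c₁) ∈ H) :
    ((c₁ * a₀ - c₀ * a₁, 0, 0) : ℤ × G × ℤ) ∈ H := by
  have hcomb : ((c₁ * a₀ - c₀ * a₁, 0, 0) : ℤ × G × ℤ) = c₁ • (a₀, 0, c₀) - c₀ • (a₁, 0, c₁) := by
    ext <;> simp [mul_comm]
  rw [hcomb]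
  exact sub_mem (zsmul_mem hx _) (zsmul_mem hy _)

theorem stmt1_general {G : Type*} [AddCommGroup G]
    {ι : Type*} (S : Set ι) (h : ι → ℤ)
    (hvals : (Set.image h S).Infinite)
    (H : AddSubgroup (ℤ × G × ℤ))
    (hφ : ∀ M ∈ S, ∃ x ∈ H, x.1 + h M * x.2.2 = 1 ∧ x.2.1 = 0) :
    ∃ D : ℤ, D ≠ 0 ∧ ((D, 0, 0) : ℤ × G × ℤ) ∈ H := by
  obtain ⟨_, M₀, hM₀, rfl⟩ := hvals.nonempty
  obtain ⟨⟨a₀, _, c₀⟩, hx, hx1, rfl⟩ := hφ M₀ hM₀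
  by_cases hc₀ : c₀ = 0
  · subst hc₀
    obtain rfl : a₀ = 1 := by simpa using hx1
    exact ⟨1, one_ne_zero, hx⟩
  obtain ⟨_, ⟨M₁, hM₁, rfl⟩, hfar⟩ := hvals.exists_le_abs_sub (h M₀) 3
  obtain ⟨⟨a₁, _, c₁⟩, hy, hy1, rfl⟩ := hφ M₁ hM₁
  exact ⟨_, fun hcross => hc₀ (Int.eq_zero_of_cross_eq_zero hx1 hy1 hfar hcross),
    AddSubgroup.cross_mem_of_mem hx hy⟩

theorem stmt1 {G : Type*} [AddCommGroup G] [Countable G]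
    {ι : Type*} (S : Set ι) (hS : S.Infinite) (h : ι → ℤ)
    (hvals : (Set.image h S).Infinite)
    (H : AddSubgroup (ℤ × G × ℤ))
    (hφ : ∀ M ∈ S, ∃ x ∈ H, x.1 + h M * x.2.2 = 1 ∧ x.2.1 = 0) :
    ∃ D : ℤ, D ≠ 0 ∧ ((D, 0, 0) : ℤ × G × ℤ) ∈ H :=
  stmt1_general S h hvals H hφ
end

section
/- Define the staircase heights h : ℕ → ℕ by h(0) = 1 and h(m+1) = h(m)·r(m) + r(m)(r(m)-1)/2, where r(m) = 2^(2^m). Then for all m, h(m) ≤ (m+1)/2 · r(m), i.e., 2·h(m) ≤ (m+1)·r(m). -/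
/-! Since `r (m + 1) = r m ^ 2`, the bound `(m + 1) r m / 2` scaled by `r m` is `(m + 1) r (m + 1) / 2`,
and the `r m (r m - 1) / 2` spacers added at step `m` stay below the remaining `r (m + 1) / 2`. -/

theorem two_mul_staircase_step_le {h r k : ℕ} (hk : 2 * h ≤ k * r) :
    2 * (h * r + r * (r - 1) / 2) ≤ (k + 1) * r ^ 2 := by
  have hspacers : 2 * (r * (r - 1) / 2) = r * (r - 1) :=
    Nat.two_mul_div_two_of_even (Nat.even_mul_pred_self r)
  calc 2 * (h * r + r * (r - 1) / 2) = 2 * h * r + r * (r - 1) := by rw [mul_add, hspacers]; ring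
    _ ≤ k * r * r + r * r := by gcongr; omega
    _ = (k + 1) * r ^ 2 := by ring

theorem stmt4 (r h : ℕ → ℕ)
    (hr : ∀ m, r m = 2 ^ (2 ^ m))
    (h0 : h 0 = 1)
    (hrec : ∀ m, h (m + 1) = h m * r m + r m * (r m - 1) / 2) :
    ∀ m, 2 * h m ≤ (m + 1) * r m := by
  intro m
  induction m with
  | zero => simp [h0, hr 0]
  | succ m ih =>
    have hsq : r (m + 1) = r m ^ 2 := by rw [hr, hr, pow_succ, pow_mul]
    rw [hrec, hsq]
    exact two_mul_staircase_step_le ih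
end

section
/- With r(m) = 2^(2^m) and h defined by h(0)=1, h(m+1) = h(m)r(m) + r(m)(r(m)-1)/2, for every d ≥ 1 the sequence h(m)^{d-1} / (∏_{i=0}^{m-1} r(i))^d tends to 0 as m → ∞; in particular its liminf is 0. -/
/-!
With `P m = ∏_{i<m} r i = 2 ^ (2 ^ m - 1)` we have `r m = 2 P m`, and the recurrence gives
`2 h m ≤ (m + 1) r m`, i.e. `h m ≤ (m + 1) P m`. Hence
`h m ^ (d - 1) / P m ^ d ≤ (m + 1) ^ (d - 1) / P m ≤ (m + 1) ^ (d - 1) / 2 ^ m → 0`.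
-/

open Filter Finset Topology

lemma two_mul_prod_two_pow_two_pow (m : ℕ) :
    2 * ∏ i ∈ range m, 2 ^ 2 ^ i = 2 ^ 2 ^ m := by
  induction m with
  | zero => simp
  | succ m ih => rw [prod_range_succ, ← mul_assoc, ih, ← pow_add, pow_succ, mul_two]

lemma two_mul_le_succ_mul_of_rec {r h : ℕ → ℕ} (heven : ∀ m, Even (r m))
    (hsq : ∀ m, r m ^ 2 ≤ r (m + 1)) (h0 : 2 * h 0 ≤ r 0)
    (hrec : ∀ m, h (m + 1) = h m * r m + r m * (r m - 1) / 2) (m : ℕ) :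
    2 * h m ≤ (m + 1) * r m := by
  induction m with
  | zero => simpa using h0
  | succ m ih =>
    have hhalf : 2 * (r m * (r m - 1) / 2) = r m * (r m - 1) :=
      Nat.mul_div_cancel' (dvd_mul_of_dvd_left (heven m).two_dvd _)
    calc 2 * h (m + 1) = 2 * h m * r m + r m * (r m - 1) := by rw [hrec, mul_add, hhalf, mul_assoc]
      _ ≤ (m + 1) * r m * r m + r m * r m := by gcongr; omega
      _ = (m + 2) * r m ^ 2 := by ring
      _ ≤ (m + 1 + 1) * r (m + 1) := by gcongr; exact hsq m

lemma tendsto_succ_pow_div_two_pow (d : ℕ) :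
    Tendsto (fun m : ℕ => ((m : ℝ) + 1) ^ d / 2 ^ m) atTop (𝓝 0) := by
  have hshift := ((tendsto_pow_const_div_const_pow_of_one_lt d one_lt_two).comp
    (tendsto_add_atTop_nat 1)).const_mul (2 : ℝ)
  rw [mul_zero] at hshift
  refine hshift.congr fun m => ?_
  simp only [Function.comp_apply, Nat.cast_add, Nat.cast_one, pow_succ]
  field_simp

lemma tendsto_pow_div_pow_succ_of_le {x P : ℕ → ℝ} (hx0 : ∀ m, 0 ≤ x m)
    (hxP : ∀ m, x m ≤ (m + 1) * P m) (hP : ∀ m, 2 ^ m ≤ P m) (d : ℕ) :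
    Tendsto (fun m => x m ^ d / P m ^ (d + 1)) atTop (𝓝 0) := by
  refine squeeze_zero (fun m => ?_) (fun m => ?_) (tendsto_succ_pow_div_two_pow d)
  · exact div_nonneg (pow_nonneg (hx0 m) d) (pow_nonneg ((pow_nonneg zero_le_two m).trans (hP m)) _)
  · have hPpos : 0 < P m := (pow_pos two_pos m).trans_le (hP m)
    calc x m ^ d / P m ^ (d + 1) ≤ ((m + 1) * P m) ^ d / P m ^ (d + 1) := by
          gcongr; exacts [hx0 m, hxP m]
      _ = (m + 1) ^ d / P m := by
          rw [mul_pow, pow_succ', mul_div_mul_right _ _ (pow_ne_zero d hPpos.ne')]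
      _ ≤ (m + 1) ^ d / 2 ^ m := by gcongr; exact hP m

theorem stmt5 (r h : ℕ → ℕ)
    (hr : ∀ m, r m = 2 ^ (2 ^ m))
    (h0 : h 0 = 1)
    (hrec : ∀ m, h (m + 1) = h m * r m + r m * (r m - 1) / 2)
    (d : ℕ) (hd : 1 ≤ d) :
    Filter.Tendsto
      (fun m => (h m : ℝ) ^ (d - 1) / (∏ i ∈ Finset.range m, (r i : ℝ)) ^ d)
      Filter.atTop (nhds 0) ∧
    Filter.liminf
      (fun m => (h m : ℝ) ^ (d - 1) / (∏ i ∈ Finset.range m, (r i : ℝ)) ^ d)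
      Filter.atTop = 0 := by
  have hprod m : 2 * ∏ i ∈ range m, r i = r m := by
    simp only [hr]; exact two_mul_prod_two_pow_two_pow m
  have heven m : Even (r m) := hr m ▸ Nat.even_pow.2 ⟨even_two, by positivity⟩
  have hsq m : r m ^ 2 ≤ r (m + 1) := by rw [hr, hr, ← pow_mul, pow_succ]
  have hle m : h m ≤ (m + 1) * ∏ i ∈ range m, r i := by
    have := two_mul_le_succ_mul_of_rec heven hsq (by simp [h0, hr]) hrec m
    rw [← hprod] at this
    linarith
  have hge m : 2 ^ m ≤ ∏ i ∈ range m, r i := by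
    simpa using pow_card_le_prod (range m) r 2 fun i _ => hr i ▸ Nat.le_self_pow (by positivity) 2
  obtain ⟨k, rfl⟩ : ∃ k, d = k + 1 := ⟨d - 1, by omega⟩
  have htend := tendsto_pow_div_pow_succ_of_le (x := fun m => (h m : ℝ))
    (P := fun m => ∏ i ∈ range m, (r i : ℝ)) (fun m => by positivity)
    (fun m => by exact_mod_cast hle m) (fun m => by exact_mod_cast hge m) k
  rw [Nat.add_sub_cancel]
  exact ⟨htend, htend.liminf_eq⟩
end

section
/- Let (Y, ν) be a measure space, S : Y → Y an invertible measure-preserving transformation, and A ⊆ Y measurable with ν(Sⁿ(A) ∩ A) = 0 for all integers n ≠ 0. Let I ⊆ Y be a measurable set of finite measure and P ⊆ ℤ a set of integers such that the sets Sᴺ(I), N ∈ P, are pairwise disjoint. Then ν(A ∩ ⋃_{N ∈ P} Sᴺ(I)) ≤ ν(I). -/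
/-!
Pulling the piece `A ∩ Sᴺ I` back by `S⁻ᴺ` gives `S⁻ᴺ A ∩ I`, of the same measure. Since `A` is
wandering, the translates `S⁻ᴺ A` are pairwise a.e. disjoint, so the pieces `S⁻ᴺ A ∩ I` are
a.e. disjoint subsets of `I` and their measures add up to at most `ν I`.
-/

open MeasureTheory Function

/-- The `n`-th power (for `n : ℤ`) of an invertible transformation given as a
measurable equivalence. -/
noncomputable def zpowIter {Y : Type*} [MeasurableSpace Y] (S : Y ≃ᵐ Y) (n : ℤ) : Y → Y :=
  if 0 ≤ n then (S : Y → Y)^[n.toNat] else (S.symm : Y → Y)^[(-n).toNat]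

theorem MeasureTheory.MeasurePreserving.measure_inter_image_equiv {Y Z : Type*}
    [MeasurableSpace Y] [MeasurableSpace Z] {μ : Measure Y} {ν : Measure Z} {T : Y ≃ᵐ Z}
    (hT : MeasurePreserving T μ ν) (A : Set Z) (I : Set Y) :
    ν (A ∩ T '' I) = μ (T ⁻¹' A ∩ I) := by
  rw [Set.inter_comm, ← Set.image_inter_preimage, T.image_eq_preimage_symm, Set.inter_comm,
    (hT.symm T).measure_preimage_equiv]

theorem MeasureTheory.tsum_measure_inter_le_of_pairwise_aedisjoint {Y ι : Type*}
    [MeasurableSpace Y] {ν : Measure Y} {B : ι → Set Y} (hB : ∀ i, MeasurableSet (B i))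
    (hdisj : Pairwise (AEDisjoint ν on B)) (I : Set Y) :
    ∑' i, ν (B i ∩ I) ≤ ν I := by
  simp only [← Measure.restrict_apply (hB _)]
  calc ∑' i, ν.restrict I (B i)
      ≤ ν.restrict I (⋃ i, B i) :=
        tsum_meas_le_meas_iUnion_of_disjoint₀ _ (fun i ↦ (hB i).nullMeasurableSet)
          fun i j hij ↦ Measure.restrict_le_self.absolutelyContinuous (hdisj hij)
    _ ≤ ν I := (measure_mono (Set.subset_univ _)).trans (Measure.restrict_apply_univ I).le

section zpowIter

variable {Y : Type*} [MeasurableSpace Y] (S : Y ≃ᵐ Y)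

theorem zpowIter_eq_coe_zpow (n : ℤ) : zpowIter S n = ⇑(S.toEquiv ^ n) := by
  unfold zpowIter
  split_ifs with h
  · obtain ⟨k, rfl⟩ := Int.eq_ofNat_of_zero_le h
    simp [Equiv.Perm.coe_pow]
  · obtain ⟨k, rfl⟩ := Int.exists_eq_neg_ofNat (not_le.1 h).le
    rw [zpow_neg, zpow_natCast, ← inv_pow]
    simp
    rfl

theorem measurable_zpowIter (n : ℤ) : Measurable (zpowIter S n) := by
  unfold zpowIter
  split_ifs
  · exact S.measurable.iterate _
  · exact S.symm.measurable.iterate _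

theorem image_zpowIter_image_zpowIter (m n : ℤ) (X : Set Y) :
    zpowIter S m '' (zpowIter S n '' X) = zpowIter S (m + n) '' X := by
  simp only [zpowIter_eq_coe_zpow, ← Set.image_comp, ← Equiv.Perm.coe_mul, ← zpow_add]

theorem preimage_zpowIter (n : ℤ) (X : Set Y) :
    zpowIter S n ⁻¹' X = zpowIter S (-n) '' X := by
  rw [zpowIter_eq_coe_zpow, zpowIter_eq_coe_zpow, Equiv.image_eq_preimage_symm, zpow_neg,
    Equiv.Perm.inv_def, Equiv.symm_symm]

noncomputable def zpowEquiv (n : ℤ) : Y ≃ᵐ Y where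
  toEquiv := S.toEquiv ^ n
  measurable_toFun := zpowIter_eq_coe_zpow S n ▸ measurable_zpowIter S n
  measurable_invFun := by
    rw [← Equiv.Perm.inv_def, ← zpow_neg, ← zpowIter_eq_coe_zpow]
    exact measurable_zpowIter S (-n)

theorem coe_zpowEquiv (n : ℤ) : ⇑(zpowEquiv S n) = zpowIter S n :=
  (zpowIter_eq_coe_zpow S n).symm

variable {S} {ν : Measure Y}

theorem measurePreserving_zpowIter (hS : MeasurePreserving S ν ν) (n : ℤ) :
    MeasurePreserving (zpowIter S n) ν ν := by
  unfold zpowIter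
  split_ifs
  · exact hS.iterate _
  · exact (hS.symm S).iterate _

theorem MeasureTheory.MeasurePreserving.measure_inter_image_zpowIter
    (hS : MeasurePreserving S ν ν) (n : ℤ) (A I : Set Y) :
    ν (A ∩ zpowIter S n '' I) = ν (zpowIter S n ⁻¹' A ∩ I) := by
  rw [← coe_zpowEquiv]
  exact (coe_zpowEquiv S n ▸ measurePreserving_zpowIter hS n).measure_inter_image_equiv A I

theorem pairwise_aedisjoint_preimage_zpowIter (hS : MeasurePreserving S ν ν) {A : Set Y}
    (hwand : ∀ n : ℤ, n ≠ 0 → ν (zpowIter S n '' A ∩ A) = 0) :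
    Pairwise (AEDisjoint ν on fun n ↦ zpowIter S n ⁻¹' A) := by
  intro m n hmn
  change ν (zpowIter S m ⁻¹' A ∩ zpowIter S n ⁻¹' A) = 0
  rw [← hS.measure_inter_image_zpowIter, preimage_zpowIter, image_zpowIter_image_zpowIter,
    Set.inter_comm]
  exact hwand _ (by omega)

end zpowIter

theorem stmt7_general {Y : Type*} [MeasurableSpace Y] (ν : Measure Y)
    (S : Y ≃ᵐ Y) (hS : MeasurePreserving S ν ν)
    (A I : Set Y) (hA : MeasurableSet A)
    (P : Set ℤ)
    (hwand : ∀ n : ℤ, n ≠ 0 → ν (zpowIter S n '' A ∩ A) = 0) :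
    ν (A ∩ ⋃ N ∈ P, zpowIter S N '' I) ≤ ν I := by
  rw [Set.inter_iUnion₂]
  calc ν (⋃ N ∈ P, A ∩ zpowIter S N '' I)
      ≤ ∑' N : P, ν (A ∩ zpowIter S N '' I) := measure_biUnion_le ν P.to_countable _
    _ = ∑' N : P, ν (zpowIter S N ⁻¹' A ∩ I) := by
        simp only [hS.measure_inter_image_zpowIter]
    _ ≤ ν I :=
        tsum_measure_inter_le_of_pairwise_aedisjoint (B := fun N : P ↦ zpowIter S N ⁻¹' A)
          (fun N ↦ measurable_zpowIter S N hA)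
          ((pairwise_aedisjoint_preimage_zpowIter hS hwand).comp_of_injective
            Subtype.val_injective) I

theorem stmt7 {Y : Type*} [MeasurableSpace Y] (ν : Measure Y)
    (S : Y ≃ᵐ Y) (hS : MeasurePreserving S ν ν)
    (A I : Set Y) (hA : MeasurableSet A) (hI : MeasurableSet I) (hIfin : ν I < ⊤)
    (P : Set ℤ)
    (hwand : ∀ n : ℤ, n ≠ 0 → ν (zpowIter S n '' A ∩ A) = 0)
    (hdisj : P.PairwiseDisjoint (fun N => zpowIter S N '' I)) :
    ν (A ∩ ⋃ N ∈ P, zpowIter S N '' I) ≤ ν I :=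
  stmt7_general ν S hS A I hA P hwand
end

section
/- Let (X, μ) be a measure space in which every set of infinite measure has a subset of finite positive measure, and let T be a measure-preserving transformation. Suppose 𝒞 is a sufficient class, meaning for every measurable A, μ(A) = inf{ Σ_j μ(I_j) : (I_j) a countable cover of A by members of 𝒞 }. If T is recurrent on 𝒞 (i.e., for every I ∈ 𝒞 of positive measure, μ(I \ ⋃_{i≥1} T^{-i}I) = 0), then T is conservative: there is no measurable set A of positive measure with μ(A ∩ T^{-n}A) = 0 for all n ≥ 1. -/
/-!
Let `W` be a wandering set of finite positive measure. By sufficiency, `W` is covered by members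
of `𝒞` of total measure less than `2 μ W`, so some `I ∈ 𝒞` satisfies `μ I < 2 μ (W ∩ I)`.
On the other hand, almost every point of `A = W ∩ I` returns to `I`, and since `A` is wandering
its first return lands in `I \ A`. The first-return map does not increase measure (a telescoping
argument on preimages under `T`), so `μ A ≤ μ (I \ A)`, i.e. `2 μ A ≤ μ I`: a contradiction.
-/

open MeasureTheory Set

section

variable {X : Type*}

/-- `entrySet T I R m` is the set of points whose orbit avoids `I` at times `1, …, m` and lies in
`R` at time `m + 1`. -/
def entrySet (T : X → X) (I R : Set X) : ℕ → Set X
  | 0 => T ⁻¹' R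
  | m + 1 => T ⁻¹' (entrySet T I R m \ I)

theorem mem_entrySet {T : X → X} {I R : Set X} {m : ℕ} {x : X} :
    x ∈ entrySet T I R m ↔ T^[m + 1] x ∈ R ∧ ∀ k < m, T^[k + 1] x ∉ I := by
  induction m generalizing x with
  | zero => simp [entrySet]
  | succ m ih =>
    simp only [entrySet, mem_preimage, mem_sdiff, ih, Nat.forall_lt_succ_left,
      Function.iterate_succ_apply, Function.iterate_zero, id_eq]
    tauto

theorem iUnion_entrySet_self (T : X → X) (I : Set X) :
    ⋃ m, entrySet T I I m = ⋃ (i : ℕ) (_ : 1 ≤ i), T^[i] ⁻¹' I := by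
  ext x
  simp only [mem_iUnion, mem_entrySet, mem_preimage, exists_prop]
  constructor
  · rintro ⟨m, hm, -⟩
    exact ⟨m + 1, m.succ_pos, hm⟩
  · rintro ⟨i, hi, hx⟩
    classical
    have hvisit : ∃ n, T^[n + 1] x ∈ I := ⟨i - 1, by rwa [Nat.sub_add_cancel hi]⟩
    exact ⟨Nat.find hvisit, Nat.find_spec hvisit, fun k hk => Nat.find_min hvisit hk⟩

variable [MeasurableSpace X]

theorem measurableSet_entrySet {T : X → X} (hT : Measurable T) {I R : Set X}
    (hI : MeasurableSet I) (hR : MeasurableSet R) : ∀ m, MeasurableSet (entrySet T I R m)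
  | 0 => hR.preimage hT
  | m + 1 => ((measurableSet_entrySet hT hI hR m).diff hI).preimage hT

/-- Kac-type bound: the points of `I` whose first return to `I` lands in `R` have total measure at
most `μ R`. -/
theorem tsum_measure_entrySet_inter_le {μ : Measure X} {T : X → X} (hT : MeasurePreserving T μ μ)
    {I R : Set X} (hI : MeasurableSet I) (hR : MeasurableSet R) :
    ∑' m, μ (entrySet T I R m ∩ I) ≤ μ R := by
  have hmeas := measurableSet_entrySet hT.measurable hI hR
  have hstep : ∀ m, μ (entrySet T I R m ∩ I) + μ (entrySet T I R (m + 1)) =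
      μ (entrySet T I R m) := fun m => by
    rw [entrySet, hT.measure_preimage ((hmeas m).diff hI).nullMeasurableSet,
      measure_inter_add_sdiff _ hI]
  have htelescope : ∀ N, ∑ m ∈ Finset.range N, μ (entrySet T I R m ∩ I) +
      μ (entrySet T I R N) = μ R := by
    intro N
    induction N with
    | zero => simp [entrySet, hT.measure_preimage hR.nullMeasurableSet]
    | succ N ih => rw [Finset.sum_range_succ, add_assoc, hstep, ih]
  exact ENNReal.tsum_le_of_sum_range_le fun N => le_self_add.trans (htelescope N).le

def IsWandering (μ : Measure X) (T : X → X) (A : Set X) : Prop :=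
  ∀ n : ℕ, 1 ≤ n → μ (A ∩ T^[n] ⁻¹' A) = 0

theorem IsWandering.mono {μ : Measure X} {T : X → X} {A B : Set X} (hB : IsWandering μ T B)
    (hAB : A ⊆ B) : IsWandering μ T A := fun n hn =>
  measure_mono_null (inter_subset_inter hAB (preimage_mono hAB)) (hB n hn)

theorem IsWandering.measure_le_measure_diff {μ : Measure X} {T : X → X} {I A : Set X}
    (hwand : IsWandering μ T A) (hT : MeasurePreserving T μ μ) (hI : MeasurableSet I)
    (hA : MeasurableSet A) (hAI : A ⊆ I) (hrec : μ (I \ ⋃ (i : ℕ) (_ : 1 ≤ i), T^[i] ⁻¹' I) = 0) :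
    μ A ≤ μ (I \ A) := by
  have hcover : A ⊆ (I \ ⋃ (i : ℕ) (_ : 1 ≤ i), T^[i] ⁻¹' I) ∪ ⋃ m, A ∩ entrySet T I I m := by
    intro x hx
    by_cases hret : x ∈ ⋃ m, entrySet T I I m
    · exact Or.inr (by rw [← inter_iUnion]; exact ⟨hx, hret⟩)
    · exact Or.inl ⟨hAI hx, by rwa [iUnion_entrySet_self] at hret⟩
  have hpiece : ∀ m, A ∩ entrySet T I I m ⊆
      (A ∩ T^[m + 1] ⁻¹' A) ∪ (entrySet T I (I \ A) m ∩ I) := by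
    rintro m x ⟨hxA, hx⟩
    rw [mem_entrySet] at hx
    by_cases hback : T^[m + 1] x ∈ A
    · exact Or.inl ⟨hxA, hback⟩
    · exact Or.inr ⟨mem_entrySet.2 ⟨⟨hx.1, hback⟩, hx.2⟩, hAI hxA⟩
  calc μ A ≤ μ (I \ ⋃ (i : ℕ) (_ : 1 ≤ i), T^[i] ⁻¹' I) + μ (⋃ m, A ∩ entrySet T I I m) :=
        (measure_mono hcover).trans (measure_union_le _ _)
    _ ≤ ∑' m, μ (A ∩ entrySet T I I m) := by rw [hrec, zero_add]; exact measure_iUnion_le _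
    _ ≤ ∑' m, μ (entrySet T I (I \ A) m ∩ I) := ENNReal.tsum_le_tsum fun m =>
        (measure_mono (hpiece m)).trans <| (measure_union_le _ _).trans_eq <| by
          rw [hwand (m + 1) m.succ_pos, zero_add]
    _ ≤ μ (I \ A) := tsum_measure_entrySet_inter_le hT hI (hI.diff hA)

theorem IsWandering.two_mul_measure_le {μ : Measure X} {T : X → X} {I A : Set X}
    (hwand : IsWandering μ T A) (hT : MeasurePreserving T μ μ) (hI : MeasurableSet I)
    (hA : MeasurableSet A) (hAI : A ⊆ I) (hrec : μ (I \ ⋃ (i : ℕ) (_ : 1 ≤ i), T^[i] ⁻¹' I) = 0) :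
    2 * μ A ≤ μ I := by
  calc 2 * μ A ≤ μ (I ∩ A) + μ (I \ A) := by
        rw [two_mul, inter_eq_right.2 hAI]
        exact add_le_add le_rfl (hwand.measure_le_measure_diff hT hI hA hAI hrec)
    _ = μ I := measure_inter_add_sdiff I hA

theorem exists_measure_lt_two_mul_measure_inter {μ : Measure X} {W : Set X} {I : ℕ → Set X}
    (hcover : W ⊆ ⋃ j, I j) (hlt : ∑' j, μ (I j) < 2 * μ W) :
    ∃ j, μ (I j) < 2 * μ (W ∩ I j) := by
  by_contra! hle
  have hW : μ W ≤ ∑' j, μ (W ∩ I j) := by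
    calc μ W = μ (⋃ j, W ∩ I j) := by rw [← inter_iUnion, inter_eq_self_of_subset_left hcover]
      _ ≤ ∑' j, μ (W ∩ I j) := measure_iUnion_le _
  refine hlt.not_ge ?_
  calc 2 * μ W ≤ ∑' j, 2 * μ (W ∩ I j) := by rw [ENNReal.tsum_mul_left]; gcongr
    _ ≤ ∑' j, μ (I j) := ENNReal.tsum_le_tsum hle

end

theorem stmt8 {X : Type*} [MeasurableSpace X] (μ : Measure X)
    (hfin : ∀ A : Set X, MeasurableSet A → μ A = ⊤ →
      ∃ B ⊆ A, MeasurableSet B ∧ 0 < μ B ∧ μ B < ⊤)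
    (T : X → X) (hT : MeasurePreserving T μ μ)
    (𝒞 : Set (Set X)) (h𝒞meas : ∀ I ∈ 𝒞, MeasurableSet I)
    (hsuff : ∀ A : Set X, MeasurableSet A →
      μ A = ⨅ (I : ℕ → Set X) (_ : ∀ j, I j ∈ 𝒞) (_ : A ⊆ ⋃ j, I j), ∑' j, μ (I j))
    (hrec : ∀ I ∈ 𝒞, 0 < μ I →
      μ (I \ ⋃ (i : ℕ) (_ : 1 ≤ i), T^[i] ⁻¹' I) = 0) :
    ¬ ∃ A : Set X, MeasurableSet A ∧ 0 < μ A ∧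
      ∀ n : ℕ, 1 ≤ n → μ (A ∩ T^[n] ⁻¹' A) = 0 := by
  rintro ⟨W₀, hW₀m, hW₀pos, hW₀wand⟩
  obtain ⟨W, hWW₀, hWm, hWpos, hWfin⟩ : ∃ W ⊆ W₀, MeasurableSet W ∧ 0 < μ W ∧ μ W < ⊤ := by
    by_cases hW₀ : μ W₀ = ⊤
    · exact hfin W₀ hW₀m hW₀
    · exact ⟨W₀, subset_rfl, hW₀m, hW₀pos, lt_top_iff_ne_top.2 hW₀⟩
  have hcover_lt : ⨅ (I : ℕ → Set X) (_ : ∀ j, I j ∈ 𝒞) (_ : W ⊆ ⋃ j, I j), ∑' j, μ (I j)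
      < 2 * μ W := by
    rw [← hsuff W hWm, two_mul]
    exact ENNReal.lt_add_right hWfin.ne hWpos.ne'
  simp only [iInf_lt_iff] at hcover_lt
  obtain ⟨I, hI𝒞, hcover, hlt⟩ := hcover_lt
  obtain ⟨j, hj⟩ := exists_measure_lt_two_mul_measure_inter hcover hlt
  have hIm := h𝒞meas _ (hI𝒞 j)
  have hApos : μ (W ∩ I j) ≠ 0 := fun h => by simp [h] at hj
  have hIpos : 0 < μ (I j) := (pos_of_ne_zero hApos).trans_le (measure_mono inter_subset_right)
  have hwand : IsWandering μ T (W ∩ I j) :=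
    IsWandering.mono hW₀wand (inter_subset_left.trans hWW₀)
  exact hj.not_ge <| hwand.two_mul_measure_le hT hIm (hWm.inter hIm) inter_subset_right
    (hrec _ (hI𝒞 j) hIpos)
end

section
/- Let (X, μ) be a measure space, T measure-preserving, A a measurable set such that μ(A ∩ T^{-n}A) = 0 for all n ≥ 1, and I a measurable set of positive finite measure with μ(A ∩ I) > (1/2)·μ(I). Then μ(I \ ⋃_{n≥1} T^{-n}(I)) > 0; in particular almost-sure return to I fails. -/
/-!
Pull the sets `A ∩ T⁻ⁿ B`, `1 ≤ n ≤ m`, back by `T^{m-n}`: they all land in `T⁻ᵐ B`, and they are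
almost disjoint because a point in two of them would visit `A` twice. Hence
`∑ₙ μ (A ∩ T⁻ⁿ B) ≤ μ B`. Since `A` does not return to itself, the points of `A` returning to `I`
return to `I \ A`, so at most `μ (I \ A)` of `A` returns to `I`, and at most `2 μ (I \ A) < μ I`
of `I` returns to `I`.
-/

open MeasureTheory

section Wandering

variable {X : Type*} [MeasurableSpace X] {μ : Measure X} {T : X → X} {A : Set X}

theorem measure_preimage_iterate_inter_preimage_iterate_eq_zero (hT : MeasurePreserving T μ μ)
    (hA : MeasurableSet A) (hwand : ∀ n : ℕ, 1 ≤ n → μ (A ∩ T^[n] ⁻¹' A) = 0)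
    {s t : ℕ} (hst : s < t) : μ (T^[s] ⁻¹' A ∩ T^[t] ⁻¹' A) = 0 := by
  have hset : T^[s] ⁻¹' A ∩ T^[t] ⁻¹' A = T^[s] ⁻¹' (A ∩ T^[t - s] ⁻¹' A) := by
    ext x
    simp only [Set.mem_inter_iff, Set.mem_preimage, ← Function.iterate_add_apply,
      Nat.sub_add_cancel hst.le]
  rw [hset, (hT.iterate s).measure_preimage
    (hA.inter (hA.preimage (hT.measurable.iterate _))).nullMeasurableSet]
  exact hwand _ (Nat.sub_pos_of_lt hst)

theorem sum_measure_inter_preimage_iterate_le (hT : MeasurePreserving T μ μ)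
    (hA : MeasurableSet A) (hwand : ∀ n : ℕ, 1 ≤ n → μ (A ∩ T^[n] ⁻¹' A) = 0)
    {B : Set X} (hB : MeasurableSet B) (m : ℕ) :
    ∑ n ∈ Finset.range m, μ (A ∩ T^[n + 1] ⁻¹' B) ≤ μ B := by
  have hmeas : ∀ k, Measurable T^[k] := hT.measurable.iterate
  set Q : ℕ → Set X := fun n => T^[m - (n + 1)] ⁻¹' (A ∩ T^[n + 1] ⁻¹' B)
  have hQ : ∀ n ∈ Finset.range m, Q n ⊆ T^[m - (n + 1)] ⁻¹' A ∩ T^[m] ⁻¹' B := by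
    intro n hn x ⟨hxA, hxB⟩
    refine ⟨hxA, ?_⟩
    rwa [Set.mem_preimage, ← Function.iterate_add_apply,
      Nat.add_sub_cancel' (Finset.mem_range.1 hn)] at hxB
  have hdisj : (Finset.range m : Set ℕ).Pairwise (Function.onFun (AEDisjoint μ) Q) := by
    intro i hi j hj hij
    refine measure_mono_null (Set.inter_subset_inter (hQ i hi) (hQ j hj) |>.trans ?_)
      (measure_preimage_iterate_inter_preimage_iterate_eq_zero hT hA hwand
        (s := min (m - (i + 1)) (m - (j + 1))) (t := max (m - (i + 1)) (m - (j + 1)))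
        (by simp only [Finset.coe_range, Set.mem_Iio] at hi hj; omega))
    rintro x ⟨⟨hxi, -⟩, hxj, -⟩
    rcases le_total (m - (i + 1)) (m - (j + 1)) with h | h
    · simp only [min_eq_left h, max_eq_right h]; exact ⟨hxi, hxj⟩
    · simp only [min_eq_right h, max_eq_left h]; exact ⟨hxj, hxi⟩
  calc ∑ n ∈ Finset.range m, μ (A ∩ T^[n + 1] ⁻¹' B)
      = ∑ n ∈ Finset.range m, μ (Q n) := Finset.sum_congr rfl fun n _ =>
        ((hT.iterate _).measure_preimage (hA.inter (hB.preimage (hmeas _))).nullMeasurableSet).symm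
    _ = μ (⋃ n ∈ Finset.range m, Q n) := (measure_biUnion_finset₀ hdisj fun n _ =>
        ((hA.inter (hB.preimage (hmeas _))).preimage (hmeas _)).nullMeasurableSet).symm
    _ ≤ μ (T^[m] ⁻¹' B) := measure_mono (Set.iUnion₂_subset fun n hn => (hQ n hn).trans
        Set.inter_subset_right)
    _ = μ B := (hT.iterate m).measure_preimage hB.nullMeasurableSet

theorem measure_inter_iUnion_preimage_iterate_le (hT : MeasurePreserving T μ μ)
    (hA : MeasurableSet A) (hwand : ∀ n : ℕ, 1 ≤ n → μ (A ∩ T^[n] ⁻¹' A) = 0)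
    {I : Set X} (hI : MeasurableSet I) :
    μ (A ∩ ⋃ (n : ℕ) (_ : 1 ≤ n), T^[n] ⁻¹' I) ≤ μ (I \ A) := by
  have hcover : A ∩ ⋃ (n : ℕ) (_ : 1 ≤ n), T^[n] ⁻¹' I ⊆ ⋃ n : ℕ, A ∩ T^[n + 1] ⁻¹' I := by
    rintro x ⟨hxA, hxI⟩
    obtain ⟨n, hn, hxn⟩ := Set.mem_iUnion₂.1 hxI
    exact Set.mem_iUnion.2 ⟨n - 1, hxA, by rwa [Nat.sub_add_cancel hn]⟩
  have hlands_outside_A : ∀ n : ℕ, μ (A ∩ T^[n + 1] ⁻¹' I) ≤ μ (A ∩ T^[n + 1] ⁻¹' (I \ A)) := by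
    intro n
    refine measure_mono_ae (ae_le_set.2 (measure_mono_null ?_ (hwand (n + 1) n.succ_pos)))
    rintro x ⟨⟨hxA, hxI⟩, hx⟩
    refine ⟨hxA, ?_⟩
    by_contra hxA'
    exact hx ⟨hxA, hxI, hxA'⟩
  calc μ (A ∩ ⋃ (n : ℕ) (_ : 1 ≤ n), T^[n] ⁻¹' I)
      ≤ ∑' n : ℕ, μ (A ∩ T^[n + 1] ⁻¹' I) := (measure_mono hcover).trans (measure_iUnion_le _)
    _ ≤ ∑' n : ℕ, μ (A ∩ T^[n + 1] ⁻¹' (I \ A)) := ENNReal.tsum_le_tsum hlands_outside_A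
    _ ≤ μ (I \ A) := ENNReal.tsum_le_of_sum_range_le
        (sum_measure_inter_preimage_iterate_le hT hA hwand (hI.diff hA))

end Wandering

theorem ENNReal.add_self_lt_of_half_lt {a b c : ENNReal} (hb : b ≠ ⊤) (habc : a + c = b)
    (ha : b / 2 < a) : c + c < b := by
  have hc : c ≠ ⊤ := ne_top_of_le_ne_top hb (habc ▸ le_add_self)
  have hca : c < a := by
    by_contra! hac
    have : b < b := calc
      b = b / 2 + b / 2 := (ENNReal.add_halves b).symm
      _ < a + c := ENNReal.add_lt_add_of_lt_of_le (ne_top_of_lt ha) ha (ha.le.trans hac)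
      _ = b := habc
    exact this.false
  exact habc ▸ ENNReal.add_lt_add_right hc hca

theorem stmt9_general {X : Type*} [MeasurableSpace X] (μ : Measure X)
    (T : X → X) (hT : MeasurePreserving T μ μ)
    (A I : Set X) (hA : MeasurableSet A) (hI : MeasurableSet I)
    (hwand : ∀ n : ℕ, 1 ≤ n → μ (A ∩ T^[n] ⁻¹' A) = 0)
    (hIfin : μ I < ⊤)
    (hfull : μ I / 2 < μ (A ∩ I)) :
    0 < μ (I \ ⋃ (n : ℕ) (_ : 1 ≤ n), T^[n] ⁻¹' I) := by
  set U := ⋃ (n : ℕ) (_ : 1 ≤ n), T^[n] ⁻¹' I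
  have hsplit : I ∩ U ⊆ (I \ A) ∪ (A ∩ U) := fun x ⟨hxI, hxU⟩ =>
    (em (x ∈ A)).elim (fun hxA => Or.inr ⟨hxA, hxU⟩) fun hxA => Or.inl ⟨hxI, hxA⟩
  have hreturn : μ (I ∩ U) ≤ μ (I \ A) + μ (I \ A) := calc
    μ (I ∩ U) ≤ μ (I \ A) + μ (A ∩ U) := (measure_mono hsplit).trans (measure_union_le _ _)
    _ ≤ μ (I \ A) + μ (I \ A) :=
      add_le_add le_rfl (measure_inter_iUnion_preimage_iterate_le hT hA hwand hI)
  have hsmall : μ (I \ A) + μ (I \ A) < μ I := ENNReal.add_self_lt_of_half_lt hIfin.ne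
    (by rw [Set.inter_comm]; exact measure_inter_add_sdiff I hA) hfull
  refine pos_iff_ne_zero.2 fun hnull => (lt_irrefl (μ I)) ?_
  calc μ I ≤ μ (I ∩ U) + μ (I \ U) := measure_le_inter_add_sdiff μ I U
    _ = μ (I ∩ U) := by rw [hnull, add_zero]
    _ < μ I := hreturn.trans_lt hsmall

theorem stmt9 {X : Type*} [MeasurableSpace X] (μ : Measure X)
    (T : X → X) (hT : MeasurePreserving T μ μ)
    (A I : Set X) (hA : MeasurableSet A) (hI : MeasurableSet I)
    (hwand : ∀ n : ℕ, 1 ≤ n → μ (A ∩ T^[n] ⁻¹' A) = 0)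
    (hIpos : 0 < μ I) (hIfin : μ I < ⊤)
    (hfull : μ I / 2 < μ (A ∩ I)) :
    0 < μ (I \ ⋃ (n : ℕ) (_ : 1 ≤ n), T^[n] ⁻¹' I) :=
  stmt9_general μ T hT A I hA hI hwand hIfin hfull
end
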